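/- arXiv:1702.03062 — 2 statements merged into one kernel-verified Lean document; each statement's English description precedes it below -/
import Mathlib

section
/- Define Q_sb(ℓ,m,M) = 1 − 2^{−(M−ℓ−1)} Σ_{j=0}^{M−m−1} C(M−ℓ−1, j), and for M/2 < m < M let ℓ*_sb(m,M) be the largest integer ℓ with Q_sb(ℓ,m,M) ≥ 1/2. Then there is an absolute constant C such that for all sufficiently large M and all integers m with M/2 < m < M, |ℓ*_sb(m,M) − (2m − M)| ≤ C. In particular, if m = m(M) satisfies m/M → δ ∈ (1/2, 1) as M → ∞, then ℓ*_sb(m,M)/M = (2m/M − 1) + O(1/M) → 2δ − 1. -/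
open scoped BigOperators
open Filter

/-- `Q_sb(ℓ,m,M) = 1 − 2^{−(M−ℓ−1)} Σ_{j=0}^{M−m−1} C(M−ℓ−1, j)`. -/
noncomputable def Qsb (ℓ m M : ℕ) : ℝ :=
  1 - (2:ℝ) ^ (-((M:ℤ) - ℓ - 1)) * ∑ j ∈ Finset.range (M - m), ((M - ℓ - 1).choose j : ℝ)

/-!
The transition sits exactly at `ℓ = 2m − M`, so `C = 0` works. With `n = M − ℓ − 1` and
`k = M − m`, the condition `Q_sb ≥ 1/2` says that the lowest `k` binomial coefficients of row
`n` carry at most half of the row's mass `2ⁿ`. By the symmetry `C(n, j) = C(n, n − j)` the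
remaining coefficients have the same mass as the lowest `n + 1 − k` ones, and the partial sums
of a row are strictly increasing, so this happens exactly when `k ≤ n + 1 − k`, i.e. when
`ℓ ≤ 2m − M`.
-/

namespace Nat

theorem sum_range_choose_add_sum_range_choose {n k : ℕ} (hk : k ≤ n + 1) :
    ∑ j ∈ Finset.range k, n.choose j + ∑ j ∈ Finset.range (n + 1 - k), n.choose j = 2 ^ n := by
  have hsymm : ∑ j ∈ Finset.range (n + 1 - k), n.choose j
      = ∑ j ∈ Finset.Ico k (n + 1), n.choose j := by
    have hreflect := Finset.sum_Ico_reflect n.choose 0 (Nat.sub_le (n + 1) k)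
    rw [Nat.sub_sub_self hk, Nat.sub_zero] at hreflect
    rw [Finset.range_eq_Ico, ← hreflect]
    refine Finset.sum_congr rfl fun j hj => (Nat.choose_symm ?_).symm
    have := (Finset.mem_Ico.1 hj).2
    omega
  rw [hsymm, Finset.sum_range_add_sum_Ico _ hk, Nat.sum_range_choose]

theorem sum_range_choose_lt_sum_range_choose {n a b : ℕ} (hab : a < b) (hb : b ≤ n + 1) :
    ∑ j ∈ Finset.range a, n.choose j < ∑ j ∈ Finset.range b, n.choose j :=
  calc ∑ j ∈ Finset.range a, n.choose j
      < ∑ j ∈ Finset.range (a + 1), n.choose j := by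
        rw [Finset.sum_range_succ]
        exact Nat.lt_add_of_pos_right (Nat.choose_pos (by omega))
    _ ≤ ∑ j ∈ Finset.range b, n.choose j :=
        Finset.sum_le_sum_of_subset (Finset.range_subset_range.2 hab)

theorem two_mul_sum_range_choose_le_iff (n k : ℕ) :
    2 * ∑ j ∈ Finset.range k, n.choose j ≤ 2 ^ n ↔ 2 * k ≤ n + 1 := by
  rcases le_or_gt k (n + 1) with hk | hk
  · have hsplit := sum_range_choose_add_sum_range_choose hk
    have hmono : ∑ j ∈ Finset.range k, n.choose j ≤ ∑ j ∈ Finset.range (n + 1 - k), n.choose j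
        ↔ k ≤ n + 1 - k := by
      constructor
      · intro h
        by_contra! hlt
        exact (sum_range_choose_lt_sum_range_choose hlt hk).not_ge h
      · intro h
        exact Finset.sum_le_sum_of_subset (Finset.range_subset_range.2 h)
    omega
  · have hfull : 2 ^ n ≤ ∑ j ∈ Finset.range k, n.choose j :=
      (Nat.sum_range_choose n).symm.le.trans
        (Finset.sum_le_sum_of_subset (Finset.range_subset_range.2 hk.le))
    have := Nat.two_pow_pos n
    omega

end Nat

theorem half_le_Qsb_iff {ℓ m M : ℕ} (hM : M ≤ 2 * m) (hm : m < M) :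
    (1:ℝ) / 2 ≤ Qsb ℓ m M ↔ ℓ ≤ 2 * m - M := by
  unfold Qsb
  rcases lt_or_ge ℓ M with hℓ | hℓ
  · obtain ⟨n, rfl⟩ : ∃ n, M = ℓ + n + 1 := ⟨M - ℓ - 1, by omega⟩
    have hexp : -(((ℓ + n + 1 : ℕ) : ℤ) - ℓ - 1) = -(n : ℤ) := by push_cast; ring
    rw [hexp, zpow_neg, zpow_natCast, show ℓ + n + 1 - ℓ - 1 = n by omega]
    have hreal : (1:ℝ) / 2 ≤ 1 - ((2:ℝ) ^ n)⁻¹ * ∑ j ∈ Finset.range (ℓ + n + 1 - m),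
          (n.choose j : ℝ)
        ↔ 2 * ∑ j ∈ Finset.range (ℓ + n + 1 - m), n.choose j ≤ 2 ^ n := by
      rw [← Nat.cast_le (α := ℝ)]
      push_cast
      rw [inv_mul_eq_div, le_sub_comm, div_le_iff₀ (by positivity)]
      constructor <;> intro h <;> linarith
    rw [hreal, Nat.two_mul_sum_range_choose_le_iff]
    omega
  · have hexp : (1:ℤ) ≤ -((M:ℤ) - ℓ - 1) := by omega
    have hpow : (2:ℝ) ≤ (2:ℝ) ^ (-((M:ℤ) - ℓ - 1)) := by
      simpa using zpow_le_zpow_right₀ (by norm_num : (1:ℝ) ≤ 2) hexp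
    have hsum : ∑ j ∈ Finset.range (M - m), ((M - ℓ - 1).choose j : ℝ) = 1 := by
      rw [show M - ℓ - 1 = 0 by omega, show M - m = M - m - 1 + 1 by omega,
        Finset.sum_range_succ']
      simp
    rw [hsum, mul_one]
    constructor
    · intro h
      linarith
    · intro h
      omega

theorem isGreatest_half_le_Qsb {m M : ℕ} (hM : M ≤ 2 * m) (hm : m < M) :
    IsGreatest {ℓ : ℕ | (1:ℝ) / 2 ≤ Qsb ℓ m M} (2 * m - M) :=
  ⟨(half_le_Qsb_iff hM hm).2 le_rfl, fun _ hℓ => (half_le_Qsb_iff hM hm).1 hℓ⟩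

theorem cast_eq_of_isGreatest_half_le_Qsb {m M L : ℕ} (hM : M ≤ 2 * m) (hm : m < M)
    (hL : IsGreatest {ℓ : ℕ | (1:ℝ) / 2 ≤ Qsb ℓ m M} L) : (L : ℝ) = 2 * m - M := by
  rw [hL.unique (isGreatest_half_le_Qsb hM hm), Nat.cast_sub hM]
  push_cast
  ring

/-- The single-block finite-N phase transition `ℓ*_sb(m,M)` — the largest `ℓ` with
`Q_sb(ℓ,m,M) ≥ 1/2` — satisfies `|ℓ*_sb(m,M) − (2m − M)| ≤ C` for an absolute constant `C`,
for all sufficiently large `M` and all `M/2 < m < M`; in particular if `m/M → δ ∈ (1/2,1)`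
then `ℓ*_sb(m,M)/M → 2δ − 1`. -/
theorem single_block_phase_transition_location :
    (∃ C : ℝ, ∃ M0 : ℕ, ∀ M : ℕ, M0 ≤ M → ∀ m : ℕ, M < 2 * m → m < M →
      ∀ L : ℕ, IsGreatest {ℓ : ℕ | (1:ℝ)/2 ≤ Qsb ℓ m M} L →
        |(L : ℝ) - (2 * (m:ℝ) - M)| ≤ C) ∧
    (∀ δ : ℝ, δ ∈ Set.Ioo (1/2 : ℝ) 1 →
      ∀ m : ℕ → ℕ,
        Tendsto (fun M : ℕ => (m M : ℝ) / M) atTop (nhds δ) →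
        (∀ᶠ M : ℕ in atTop, M < 2 * m M ∧ m M < M) →
        ∀ L : ℕ → ℕ,
          (∀ᶠ M : ℕ in atTop, IsGreatest {ℓ : ℕ | (1:ℝ)/2 ≤ Qsb ℓ (m M) M} (L M)) →
          Tendsto (fun M : ℕ => (L M : ℝ) / M) atTop (nhds (2 * δ - 1))) := by
  refine ⟨⟨0, 0, fun M _ m hM hm L hL => ?_⟩, fun δ _ m hδ hmM L hL => ?_⟩
  · rw [cast_eq_of_isGreatest_half_le_Qsb hM.le hm hL, sub_self, abs_zero]
  · refine ((hδ.const_mul 2).sub_const 1).congr' ?_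
    filter_upwards [hmM, hL, eventually_gt_atTop 0] with M ⟨hM, hm⟩ hLM hMpos
    rw [cast_eq_of_isGreatest_half_le_Qsb hM.le hm hLM]
    field_simp
end

section
/- Let M be a prime number and let K = {k_1,…,k_m} be m distinct integers in {0,…,M−1} with m ≤ M. Let A^(1) be the m×M complex matrix with entries A^(1)_{i,t} = exp(2πi k_i t / M) for 1 ≤ i ≤ m, 0 ≤ t < M. Then the M columns of A^(1) are in general position in ℂ^m: every subcollection of at most m columns of A^(1) is linearly independent over ℂ. -/
/-!
Any `n ≤ m` of the columns, cut down to `n` of the rows, form a square minor `det (ζ ^ (a i * t j))`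
of the Fourier matrix, `ζ = exp (2πi / M)`, with distinct `a i < M` and distinct `t j < M`. By
Chebotarev's theorem on roots of unity such a minor never vanishes when `M` is prime.

Over `ℤ[x₁, …, xₙ]` the Vandermonde determinant `V`, a product of pairwise non-associated primes
`x j - x i`, divides the generalized Vandermonde determinant `D = det (x i ^ t j)`; write `D = V * Q`.
Substituting `x i = X ^ i` turns both determinants into products of factors `X ^ u - X ^ v`; cancelling
the common power of `X - 1` and evaluating at `1` gives `Q (1, …, 1) * ∏ (j - i) = ∏ (t j - t i)`,
which is prime to `M`. If the minor vanished, then `Q (ζ ^ a 1, …, ζ ^ a n) = 0`, so the `M`-th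
cyclotomic polynomial divides `Q (X ^ a 1, …, X ^ a n)`, and evaluating at `1` gives
`M ∣ Q (1, …, 1)`.
-/

open Finset

namespace MvPolynomial

variable {σ R : Type*} [CommRing R]

theorem X_sub_X_dvd_sub_aeval_update [DecidableEq σ] (i j : σ) (f : MvPolynomial σ R) :
    X i - X j ∣ f - aeval (Function.update X i (X j)) f := by
  rw [← Ideal.mem_span_singleton, ← Ideal.Quotient.eq]
  have h : (Ideal.Quotient.mkₐ R (Ideal.span {X i - X j})).comp
      (aeval (Function.update X i (X j))) = Ideal.Quotient.mkₐ R _ := by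
    ext k
    rcases eq_or_ne k i with rfl | hk
    · simp only [AlgHom.comp_apply, aeval_X, Function.update_self, Ideal.Quotient.mkₐ_eq_mk]
      rw [Ideal.Quotient.eq, Ideal.mem_span_singleton, ← neg_sub, neg_dvd]
    · simp [hk]
  exact (DFunLike.congr_fun h f).symm

theorem prime_X_sub_X [IsDomain R] {i j : σ} (hij : i ≠ j) :
    Prime (X i - X j : MvPolynomial σ R) := by
  classical
  let shear : MvPolynomial σ R ≃ₐ[R] MvPolynomial σ R :=
    AlgEquiv.ofAlgHom (aeval (Function.update X i (X i - X j)))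
      (aeval (Function.update X i (X i + X j)))
      (by ext k; rcases eq_or_ne k i with rfl | hk <;> simp [*, hij.symm])
      (by ext k; rcases eq_or_ne k i with rfl | hk <;> simp [*, hij.symm])
  have h : shear (X i) = X i - X j := by simp [shear]
  exact h ▸ (MulEquiv.prime_iff shear.toMulEquiv).mpr X_prime

theorem not_X_sub_X_dvd_X_sub_X [Nontrivial R] {i j k l : σ} (hki : k ≠ i) (hkj : k ≠ j)
    (hkl : k ≠ l) : ¬ (X i - X j : MvPolynomial σ R) ∣ X k - X l := by
  classical
  intro h
  have := map_dvd (eval fun x => if x = k then (1 : R) else 0) h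
  simp [hki.symm, hkj.symm, hkl.symm] at this

theorem isRelPrime_X_sub_X [IsDomain R] {a b c d : σ} (hab : a ≠ b) (hcd : c ≠ d)
    (h : ¬(a = c ∧ b = d)) (h' : ¬(a = d ∧ b = c)) :
    IsRelPrime (X a - X b : MvPolynomial σ R) (X c - X d) := by
  rw [(prime_X_sub_X hab).irreducible.isRelPrime_iff_not_dvd]
  by_cases hc : c = a ∨ c = b
  · rw [← neg_sub (X d), dvd_neg]
    exact not_X_sub_X_dvd_X_sub_X (by grind) (by grind) hcd.symm
  · exact not_X_sub_X_dvd_X_sub_X (by grind) (by grind) hcd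

end MvPolynomial

namespace Polynomial

variable {R : Type*} [CommRing R]

theorem exists_prod_X_pow_sub_X_pow_eq {ι : Type*} (s : Finset ι) (u v : ι → ℕ) :
    ∃ G : R[X], ∏ x ∈ s, (X ^ u x - X ^ v x) = (X - 1) ^ #s * G ∧
      G.eval 1 = ∏ x ∈ s, ((u x : R) - v x) := by
  refine ⟨∏ x ∈ s, (∑ i ∈ range (u x), X ^ i - ∑ i ∈ range (v x), X ^ i), ?_, ?_⟩
  · rw [pow_card_mul_prod]
    refine prod_congr rfl fun x _ => ?_
    rw [mul_sub, mul_comm, geom_sum_mul, mul_comm, geom_sum_mul]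
    ring
  · simp [eval_prod]

theorem eval_one_aeval_X_pow {σ : Type*} (h : σ → ℕ) (Q : MvPolynomial σ R) :
    (MvPolynomial.aeval (fun i => (X : R[X]) ^ h i) Q).eval 1 = MvPolynomial.eval 1 Q := by
  rw [← coe_aeval_eq_eval, MvPolynomial.comp_aeval_apply]
  simp [Pi.one_def]

end Polynomial

namespace Matrix

variable {R S : Type*} [CommRing R] [CommRing S] {n : ℕ}

def generalizedVandermonde (v : Fin n → R) (t : Fin n → ℕ) : Matrix (Fin n) (Fin n) R :=
  of fun i j => v i ^ t j

theorem generalizedVandermonde_val (v : Fin n → R) :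
    generalizedVandermonde v (fun j => (j : ℕ)) = vandermonde v :=
  rfl

theorem map_det_generalizedVandermonde {F : Type*} [FunLike F R S] [RingHomClass F R S] (f : F)
    (v : Fin n → R) (t : Fin n → ℕ) :
    f (generalizedVandermonde v t).det = (generalizedVandermonde (f ∘ v) t).det := by
  rw [← RingHom.coe_coe f, RingHom.map_det]
  congr 1
  ext i j
  simp [generalizedVandermonde]

theorem det_generalizedVandermonde_pow (x : R) (t : Fin n → ℕ) :
    (generalizedVandermonde (fun i => x ^ (i : ℕ)) t).det =
      ∏ i, ∏ j ∈ Ioi i, (x ^ t j - x ^ t i) := by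
  have h : generalizedVandermonde (fun i => x ^ (i : ℕ)) t = (vandermonde fun j => x ^ t j)ᵀ := by
    ext i j
    simp [generalizedVandermonde, ← pow_mul, mul_comm]
  rw [h, det_transpose, det_vandermonde]

open MvPolynomial in
theorem det_vandermonde_dvd_det_generalizedVandermonde [IsDomain R]
    [UniqueFactorizationMonoid R] (t : Fin n → ℕ) :
    (vandermonde (X : Fin n → MvPolynomial (Fin n) R)).det ∣ (generalizedVandermonde X t).det := by
  rw [det_vandermonde, prod_sigma']
  apply prod_dvd_of_isRelPrime
  · rintro ⟨a, b⟩ hab ⟨c, d⟩ hcd hne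
    simp only [coe_sigma, coe_univ, Set.mem_sigma_iff, Set.mem_univ, coe_Ioi, Set.mem_Ioi,
      true_and] at hab hcd
    refine isRelPrime_X_sub_X hab.ne' hcd.ne' ?_ ?_
    · rintro ⟨rfl, rfl⟩
      exact hne rfl
    · rintro ⟨rfl, rfl⟩
      exact lt_asymm hab hcd
  · rintro ⟨a, b⟩ hab
    simp only [mem_sigma, mem_univ, mem_Ioi, true_and] at hab
    have hdvd := X_sub_X_dvd_sub_aeval_update b a (generalizedVandermonde (X (R := R)) t).det
    have hsubst : aeval (Function.update (X (R := R)) b (X a))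
        (generalizedVandermonde (X (R := R)) t).det = 0 := by
      rw [map_det_generalizedVandermonde]
      exact det_zero_of_row_eq hab.ne'
        (funext fun j => by simp [generalizedVandermonde, Function.update_of_ne hab.ne])
    rwa [hsubst, sub_zero] at hdvd

open MvPolynomial in
theorem prod_sub_mul_eval_one_eq [IsDomain R] (t : Fin n → ℕ) {Q : MvPolynomial (Fin n) R}
    (hQ : (generalizedVandermonde X t).det = (vandermonde X).det * Q) :
    (∏ i : Fin n, ∏ j ∈ Ioi i, (((j : ℕ) : R) - (i : ℕ))) * eval 1 Q =
      ∏ i, ∏ j ∈ Ioi i, ((t j : R) - t i) := by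
  have h := congrArg (aeval fun i : Fin n => (Polynomial.X : Polynomial R) ^ (i : ℕ)) hQ
  rw [map_mul, ← generalizedVandermonde_val, map_det_generalizedVandermonde,
    map_det_generalizedVandermonde] at h
  simp only [Function.comp_def, aeval_X, det_generalizedVandermonde_pow, prod_sigma'] at h
  obtain ⟨Gt, hGt, hGt_one⟩ := Polynomial.exists_prod_X_pow_sub_X_pow_eq (R := R)
    (univ.sigma fun i : Fin n => Ioi i) (fun x => t x.2) (fun x => t x.1)
  obtain ⟨G, hG, hG_one⟩ := Polynomial.exists_prod_X_pow_sub_X_pow_eq (R := R)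
    (univ.sigma fun i : Fin n => Ioi i) (fun x => (x.2 : ℕ)) (fun x => (x.1 : ℕ))
  rw [hGt, hG, mul_assoc] at h
  have h_one := congrArg (Polynomial.eval 1)
    (mul_left_cancel₀ (pow_ne_zero _ (Polynomial.X_sub_C_ne_zero 1)) h)
  rw [Polynomial.eval_mul, Polynomial.eval_one_aeval_X_pow, hGt_one, hG_one] at h_one
  simpa only [prod_sigma'] using h_one.symm

end Matrix

theorem Nat.Prime.not_dvd_prod_sub {p n : ℕ} (hp : p.Prime) {t : Fin n → Fin p}
    (ht : Function.Injective t) :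
    ¬ (p : ℤ) ∣ ∏ i, ∏ j ∈ Ioi i, (((t j : ℕ) : ℤ) - (t i : ℕ)) := by
  simp only [Prime.dvd_finsetProd_iff (Nat.prime_iff_prime_int.mp hp), mem_univ, mem_Ioi,
    true_and, not_exists, not_and]
  intro i j hij hdvd
  have hdiff : ((t j : ℕ) : ℤ) - (t i : ℕ) = 0 :=
    Int.eq_zero_of_abs_lt_dvd hdvd (by rw [abs_sub_lt_iff]; omega)
  exact hij.ne' (ht (Fin.ext (by omega)))

theorem IsPrimitiveRoot.prime_dvd_eval_one {K : Type*} [Field K] [CharZero K] {p : ℕ}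
    (hp : p.Prime) {ζ : K} (hζ : IsPrimitiveRoot ζ p) {P : Polynomial ℤ}
    (hP : Polynomial.aeval ζ P = 0) : (p : ℤ) ∣ P.eval 1 := by
  have : Fact p.Prime := ⟨hp⟩
  obtain ⟨G, rfl⟩ : Polynomial.cyclotomic p ℤ ∣ P :=
    Polynomial.cyclotomic_eq_minpoly hζ hp.pos ▸
      minpoly.isIntegrallyClosed_dvd (hζ.isIntegral hp.pos) hP
  rw [Polynomial.eval_mul, Polynomial.eval_one_cyclotomic_prime]
  exact dvd_mul_right _ _

open Matrix in
theorem IsPrimitiveRoot.det_generalizedVandermonde_ne_zero {K : Type*} [Field K] [CharZero K]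
    {p n : ℕ} (hp : p.Prime) {ζ : K} (hζ : IsPrimitiveRoot ζ p) {a t : Fin n → Fin p}
    (ha : Function.Injective a) (ht : Function.Injective t) :
    (generalizedVandermonde (fun i => ζ ^ (a i : ℕ)) (fun j => t j)).det ≠ 0 := by
  obtain ⟨Q, hQ⟩ := det_vandermonde_dvd_det_generalizedVandermonde (R := ℤ) (fun j => (t j : ℕ))
  have hQ_one : ¬ (p : ℤ) ∣ MvPolynomial.eval 1 Q := fun hdvd =>
    hp.not_dvd_prod_sub ht (prod_sub_mul_eval_one_eq _ hQ ▸ dvd_mul_of_dvd_right hdvd _)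
  intro hdet
  apply hQ_one
  let φ := MvPolynomial.aeval (R := ℤ) fun i => ζ ^ (a i : ℕ)
  have hnodes : Function.Injective fun i => ζ ^ (a i : ℕ) := fun i j hij =>
    ha (Fin.ext (hζ.pow_inj (a i).isLt (a j).isLt hij))
  have hQ_root : φ Q = 0 := by
    have h := congrArg φ hQ
    rw [map_mul, map_det_generalizedVandermonde, ← generalizedVandermonde_val,
      map_det_generalizedVandermonde] at h
    simp only [Function.comp_def, φ, MvPolynomial.aeval_X] at h
    rw [hdet, eq_comm, mul_eq_zero] at h
    exact h.resolve_left (det_vandermonde_ne_zero_iff.mpr hnodes)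
  rw [← Polynomial.eval_one_aeval_X_pow fun i => (a i : ℕ)]
  refine hζ.prime_dvd_eval_one hp ?_
  rw [MvPolynomial.comp_aeval_apply]
  simpa [φ] using hQ_root

theorem linearIndependent_of_det_ne_zero {K ι κ : Type*} [Field K] [Fintype ι] [DecidableEq ι]
    {v : ι → κ → K} (r : ι → κ) (h : (Matrix.of fun i j => v j (r i)).det ≠ 0) :
    LinearIndependent K v :=
  (Matrix.linearIndependent_cols_of_isUnit
    ((Matrix.isUnit_iff_isUnit_det _).mpr (isUnit_iff_ne_zero.mpr h))).of_comp
    (LinearMap.funLeft K K r)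

theorem partialDFT_columns_general_position_general
    (M m : ℕ) (hM : Nat.Prime M)
    (k : Fin m → Fin M) (hk : Function.Injective k) :
    ∀ s : Finset (Fin M), s.card ≤ m →
      LinearIndependent ℂ (fun t : s => fun i : Fin m =>
        Complex.exp (2 * Real.pi * Complex.I * (k i : ℕ) * ((t : Fin M) : ℕ) / M)) := by
  intro s hs
  have hexp (a t : ℕ) : Complex.exp (2 * Real.pi * Complex.I * a * t / M) =
      (Complex.exp (2 * Real.pi * Complex.I / M) ^ a) ^ t := by
    rw [← pow_mul, ← Complex.exp_nat_mul]
    congr 1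
    push_cast
    ring
  rw [← linearIndependent_equiv s.equivFin.symm]
  refine linearIndependent_of_det_ne_zero (Fin.castLE hs) ?_
  convert (Complex.isPrimitiveRoot_exp M hM.ne_zero).det_generalizedVandermonde_ne_zero hM
    (hk.comp (Fin.castLE_injective hs)) (Subtype.val_injective.comp s.equivFin.symm.injective)
    using 2
  ext i j
  simp [Matrix.generalizedVandermonde, hexp]

/-- Tao's uncertainty principle consequence: for `M` prime, the columns of the
partial DFT matrix `A⁽¹⁾_{i,t} = exp(2πi k_i t / M)` (rows selected by distinct
frequencies `k_1,…,k_m`) are in general position in `ℂ^m`: every subcollection of at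
most `m` columns is linearly independent over `ℂ`. -/
theorem partialDFT_columns_general_position
    (M m : ℕ) (hM : Nat.Prime M) (hm : m ≤ M)
    (k : Fin m → Fin M) (hk : Function.Injective k) :
    ∀ s : Finset (Fin M), s.card ≤ m →
      LinearIndependent ℂ (fun t : s => fun i : Fin m =>
        Complex.exp (2 * Real.pi * Complex.I * (k i : ℕ) * ((t : Fin M) : ℕ) / M)) :=
  partialDFT_columns_general_position_general M m hM k hk
end
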